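/- arXiv:1404.2693 — 10 statements merged into one kernel-verified Lean document; each statement's English description precedes it below -/
import Mathlib

section
/- For every nonnegative integer n, the number of integer solutions (x,y,z) to x² + y² + z² + yz + xz + xy = 2n equals the number of integer solutions to x² + y² + z² = n. -/
/-!
Since `2 (x² + y² + z² + yz + xz + xy) = (x + y)² + (y + z)² + (x + z)²`, a representation of `2n`
by the form is a vector `(x + y, y + z, x + z)` of squared length `4n`. Squares are `0` or `1`
mod `4`, so all three coordinates are even, and halving them is a bijection onto the
representations of `n` as a sum of three squares, with inverse
`(u, v, w) ↦ (u - v + w, u + v - w, -u + v + w)`.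
-/

lemma Int.sq_mod_four_eq_zero_of_even {a : ℤ} (ha : Even a) : a ^ 2 % 4 = 0 := by
  obtain ⟨r, rfl⟩ := ha
  rw [show (r + r) ^ 2 = 4 * r ^ 2 by ring]
  exact Int.mul_emod_right 4 _

lemma Int.even_of_sq_add_sq_add_sq_eq_four_mul {a b c m : ℤ} (h : a ^ 2 + b ^ 2 + c ^ 2 = 4 * m) :
    Even a ∧ Even b ∧ Even c := by
  have sq_mod_four (t : ℤ) : (Even t ∧ t ^ 2 % 4 = 0) ∨ t ^ 2 % 4 = 1 := by
    rcases Int.even_or_odd t with ht | ht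
    · exact .inl ⟨ht, Int.sq_mod_four_eq_zero_of_even ht⟩
    · exact .inr (Int.sq_mod_four_eq_one_of_odd ht)
  have ha := sq_mod_four a
  have hb := sq_mod_four b
  have hc := sq_mod_four c
  generalize a ^ 2 = A at *
  generalize b ^ 2 = B at *
  generalize c ^ 2 = C at *
  rcases ha with ⟨ha, ha4⟩ | ha4 <;> rcases hb with ⟨hb, hb4⟩ | hb4 <;>
    rcases hc with ⟨hc, hc4⟩ | hc4 <;> first | exact ⟨ha, hb, hc⟩ | omega

lemma two_mul_form_eq_sum_sq_pair_sums (x y z : ℤ) :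
    2 * (x ^ 2 + y ^ 2 + z ^ 2 + y * z + x * z + x * y) = (x + y) ^ 2 + (y + z) ^ 2 + (x + z) ^ 2 := by
  ring

lemma even_pair_sums_of_form_eq_two_mul {x y z m : ℤ}
    (h : x ^ 2 + y ^ 2 + z ^ 2 + y * z + x * z + x * y = 2 * m) :
    Even (x + y) ∧ Even (y + z) ∧ Even (x + z) :=
  Int.even_of_sq_add_sq_add_sq_eq_four_mul (m := m) <| by
    rw [← two_mul_form_eq_sum_sq_pair_sums, h]; ring

lemma sum_sq_half_pair_sums_eq {x y z m : ℤ}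
    (h : x ^ 2 + y ^ 2 + z ^ 2 + y * z + x * z + x * y = 2 * m) :
    ((x + y) / 2) ^ 2 + ((y + z) / 2) ^ 2 + ((x + z) / 2) ^ 2 = m := by
  obtain ⟨⟨a, ha⟩, ⟨b, hb⟩, ⟨c, hc⟩⟩ := even_pair_sums_of_form_eq_two_mul h
  have hsq := two_mul_form_eq_sum_sq_pair_sums x y z
  rw [ha, hb, hc, h] at hsq
  rw [show (x + y) / 2 = a by omega, show (y + z) / 2 = b by omega,
    show (x + z) / 2 = c by omega]
  linarith

def formRepsEquivSumThreeSqReps (m : ℤ) :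
    {p : ℤ × ℤ × ℤ // p.1^2 + p.2.1^2 + p.2.2^2 + p.2.1*p.2.2 + p.1*p.2.2 + p.1*p.2.1 = 2 * m} ≃
      {p : ℤ × ℤ × ℤ // p.1^2 + p.2.1^2 + p.2.2^2 = m} where
  toFun := fun ⟨(x, y, z), h⟩ =>
    ⟨((x + y) / 2, (y + z) / 2, (x + z) / 2), sum_sq_half_pair_sums_eq h⟩
  invFun := fun ⟨(u, v, w), h⟩ => ⟨(u - v + w, u + v - w, -u + v + w), by
    linear_combination 2 * h⟩
  left_inv := by
    rintro ⟨⟨x, y, z⟩, h⟩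
    obtain ⟨⟨a, ha⟩, ⟨b, hb⟩, ⟨c, hc⟩⟩ := even_pair_sums_of_form_eq_two_mul h
    ext <;> dsimp only at * <;> omega
  right_inv := by
    rintro ⟨⟨u, v, w⟩, -⟩
    ext <;> dsimp only at * <;> omega

theorem stmt0 (n : ℕ) :
    Nat.card {p : ℤ × ℤ × ℤ // p.1^2 + p.2.1^2 + p.2.2^2 + p.2.1*p.2.2 + p.1*p.2.2 + p.1*p.2.1 = (2*n : ℤ)} = Nat.card {p : ℤ × ℤ × ℤ // p.1^2 + p.2.1^2 + p.2.2^2 = (n : ℤ)} :=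
  Nat.card_congr (formRepsEquivSumThreeSqReps n)
end

section
/- For every nonnegative integer n, the number of integer solutions (x,y,z) to x² + y² + z² + yz + xz + xy = 2n+1 equals the number of integer solutions to x² + y² + z² = 4n+2. -/
/-!
The substitution `(x, y, z) ↦ (x + y, y + z, x + z)` doubles the form:
`2 (x² + y² + z² + yz + xz + xy) = (x + y)² + (y + z)² + (x + z)²`. It is injective, and its
image is the sublattice of triples with even coordinate sum, which contains every triple whose sum
of squares is even. Hence it matches the representations of `m` by the form with the
representations of `2m` as a sum of three squares, for every `m`.
-/

lemma two_mul_form_eq_sum_sq_add_pairs (x y z : ℤ) :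
    2 * (x^2 + y^2 + z^2 + y*z + x*z + x*y) = (x + y)^2 + (y + z)^2 + (x + z)^2 := by
  ring

lemma Int.even_add_add_of_sq_add_sq_add_sq_eq_two_mul {a b c m : ℤ}
    (h : a^2 + b^2 + c^2 = 2 * m) : Even (a + b + c) := by
  have : Even (a^2 + b^2 + c^2) := h ▸ even_two_mul m
  simpa [Int.even_add, Int.even_pow] using this

def formRepEquivSumThreeSqRep (m : ℤ) :
    {p : ℤ × ℤ × ℤ //
        p.1^2 + p.2.1^2 + p.2.2^2 + p.2.1*p.2.2 + p.1*p.2.2 + p.1*p.2.1 = m} ≃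
      {q : ℤ × ℤ × ℤ // q.1^2 + q.2.1^2 + q.2.2^2 = 2 * m} where
  toFun := fun ⟨(x, y, z), h⟩ =>
    ⟨(x + y, y + z, x + z), by rw [← two_mul_form_eq_sum_sq_add_pairs, h]⟩
  invFun := fun ⟨(a, b, c), h⟩ =>
    ⟨((a + b + c) / 2 - b, (a + b + c) / 2 - c, (a + b + c) / 2 - a), by
      obtain ⟨s, hs⟩ :=
        Int.even_add_add_of_sq_add_sq_add_sq_eq_two_mul (a := a) (b := b) (c := c) h
      have hdiv : (a + b + c) / 2 = s := by omega
      obtain rfl : a = s + s - b - c := by omega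
      rw [hdiv]
      refine mul_left_cancel₀ two_ne_zero ?_
      rw [two_mul_form_eq_sum_sq_add_pairs]
      linear_combination h⟩
  left_inv := fun ⟨(x, y, z), _⟩ => by
    ext <;> simp only <;> omega
  right_inv := fun ⟨(a, b, c), h⟩ => by
    obtain ⟨s, hs⟩ :=
      Int.even_add_add_of_sq_add_sq_add_sq_eq_two_mul (a := a) (b := b) (c := c) h
    ext <;> simp only <;> omega

theorem stmt1 (n : ℕ) :
    Nat.card {p : ℤ × ℤ × ℤ // p.1^2 + p.2.1^2 + p.2.2^2 + p.2.1*p.2.2 + p.1*p.2.2 + p.1*p.2.1 = (2*n+1 : ℤ)} = Nat.card {p : ℤ × ℤ × ℤ // p.1^2 + p.2.1^2 + p.2.2^2 = (4*n+2 : ℤ)} := by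
  rw [Nat.card_congr (formRepEquivSumThreeSqRep (2 * n + 1))]
  congr! 4
  ring
end

section
/- For every nonnegative integer n, the number of integer solutions (x,y,z) to 3x² + 3y² + 3z² − 2yz + 2xz + 2xy = 4n equals the number of integer solutions to x² + y² + z² = n. -/
/-!
The substitution `(x, y, z) = (v + w, u - w, u - v)`, with inverse
`(u, v, w) = (s, s - z, s - y)` where `2 s = x + y + z`, multiplies `u² + v² + w²` by `4`
and is a bijection from `ℤ³` onto the triples with `x + y + z` even. A value `4 m` of the
ternary form forces `x + y + z` to be even, since otherwise the form is `3 mod 4`.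
-/

lemma form_eq_four_mul_sumSq_of_add_eq_two_mul {x y z u : ℤ} (hs : x + y + z = 2 * u) :
    3*x^2 + 3*y^2 + 3*z^2 - 2*y*z + 2*x*z + 2*x*y = 4 * (u^2 + (u - z)^2 + (u - y)^2) := by
  obtain rfl : x = 2 * u - y - z := by omega
  ring

lemma two_dvd_add_of_form_eq_four_mul {x y z m : ℤ}
    (h : 3*x^2 + 3*y^2 + 3*z^2 - 2*y*z + 2*x*z + 2*x*y = 4 * m) : 2 ∣ x + y + z := by
  by_contra hodd
  obtain ⟨k, hk⟩ : Odd (x + y + z) := Int.not_even_iff_odd.mp (fun he => hodd he.two_dvd)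
  obtain rfl : x = 2 * k + 1 - y - z := by omega
  have : 4 * m = 4 * (3*k^2 + 3*k - 2*k*z - z + z^2 - 2*k*y - y + y^2) + 3 := by
    linear_combination -h
  omega

def sumSqEquivForm (m : ℤ) :
    {q : ℤ × ℤ × ℤ // q.1^2 + q.2.1^2 + q.2.2^2 = m} ≃
      {p : ℤ × ℤ × ℤ // 3*p.1^2 + 3*p.2.1^2 + 3*p.2.2^2 - 2*p.2.1*p.2.2 + 2*p.1*p.2.2
        + 2*p.1*p.2.1 = 4 * m} where
  toFun := fun ⟨(u, v, w), hq⟩ => ⟨(v + w, u - w, u - v), by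
    simp only at hq ⊢
    linear_combination 4 * hq⟩
  invFun := fun ⟨(x, y, z), hp⟩ =>
    ⟨((x + y + z) / 2, (x + y + z) / 2 - z, (x + y + z) / 2 - y), by
      dsimp only at hp ⊢
      have hs : x + y + z = 2 * ((x + y + z) / 2) := by
        have := two_dvd_add_of_form_eq_four_mul hp
        omega
      have := form_eq_four_mul_sumSq_of_add_eq_two_mul hs
      linarith⟩
  left_inv := fun ⟨(u, v, w), _⟩ => by
    ext <;> dsimp only <;> omega
  right_inv := fun ⟨(x, y, z), hp⟩ => by
    dsimp only at hp
    have := two_dvd_add_of_form_eq_four_mul hp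
    ext <;> dsimp only <;> omega

theorem stmt3 (n : ℕ) :
    Nat.card {p : ℤ × ℤ × ℤ // 3*p.1^2 + 3*p.2.1^2 + 3*p.2.2^2 - 2*p.2.1*p.2.2 + 2*p.1*p.2.2 + 2*p.1*p.2.1 = (4*n : ℤ)} = Nat.card {p : ℤ × ℤ × ℤ // p.1^2 + p.2.1^2 + p.2.2^2 = (n : ℤ)} :=
  (Nat.card_congr (sumSqEquivForm n)).symm
end

section
/- For every nonnegative integer n, the number of integer solutions (x,y,z) to 3x² + 3y² + 3z² − 2yz + 2xz + 2xy = 8n+3 equals the number of integer solutions to x² + y² + z² = 8n+3. -/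
/-!
The form is a sum of three squares in disguise:
g(x, y, z) = (x + y + z)² + (x + y − z)² + (x − y + z)².
The linear map (x, y, z) ↦ (x + y + z, x + y − z, x − y + z) is a bijection of ℤ³ onto the triples
whose coordinates all have the same parity, and every solution of X² + Y² + Z² ≡ 3 (mod 4) has
X, Y, Z odd, so it lies in that image.
-/

lemma Int.sq_emod_four (x : ℤ) : x ^ 2 % 4 = x % 2 := by
  have h : x % 4 = 0 ∨ x % 4 = 1 ∨ x % 4 = 2 ∨ x % 4 = 3 := by omega
  rw [sq, Int.mul_emod]
  rcases h with h | h | h | h <;> rw [h] <;> omega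

lemma emod_two_eq_one_of_sq_add_sq_add_sq_modEq_three {X Y Z : ℤ}
    (h : X ^ 2 + Y ^ 2 + Z ^ 2 ≡ 3 [ZMOD 4]) : X % 2 = 1 ∧ Y % 2 = 1 ∧ Z % 2 = 1 := by
  have hX := Int.sq_emod_four X
  have hY := Int.sq_emod_four Y
  have hZ := Int.sq_emod_four Z
  unfold Int.ModEq at h
  omega

def sameParityEquiv :
    ℤ × ℤ × ℤ ≃ {q : ℤ × ℤ × ℤ // q.1 % 2 = q.2.1 % 2 ∧ q.1 % 2 = q.2.2 % 2} where
  toFun p := ⟨(p.1 + p.2.1 + p.2.2, p.1 + p.2.1 - p.2.2, p.1 - p.2.1 + p.2.2), by dsimp only; omega⟩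
  invFun q := ((q.1.2.1 + q.1.2.2) / 2, (q.1.1 - q.1.2.2) / 2, (q.1.1 - q.1.2.1) / 2)
  left_inv p := by ext <;> simp only <;> omega
  right_inv q := by obtain ⟨_, h⟩ := q; ext <;> simp only <;> omega

lemma quadForm_eq_sum_sq (x y z : ℤ) :
    3*x^2 + 3*y^2 + 3*z^2 - 2*y*z + 2*x*z + 2*x*y
      = (x + y + z) ^ 2 + (x + y - z) ^ 2 + (x - y + z) ^ 2 := by
  ring

def quadFormEquivSumSq {N : ℤ} (hN : N ≡ 3 [ZMOD 4]) :
    {p : ℤ × ℤ × ℤ // 3*p.1^2 + 3*p.2.1^2 + 3*p.2.2^2 - 2*p.2.1*p.2.2 + 2*p.1*p.2.2 + 2*p.1*p.2.1 = N}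
      ≃ {q : ℤ × ℤ × ℤ // q.1^2 + q.2.1^2 + q.2.2^2 = N} :=
  (sameParityEquiv.subtypeEquiv fun p => by
      rw [quadForm_eq_sum_sq]; rfl).trans <|
    Equiv.subtypeSubtypeEquivSubtype fun {q} hq => by
      have := emod_two_eq_one_of_sq_add_sq_add_sq_modEq_three (hq ▸ hN)
      omega

theorem stmt4 (n : ℕ) :
    Nat.card {p : ℤ × ℤ × ℤ // 3*p.1^2 + 3*p.2.1^2 + 3*p.2.2^2 - 2*p.2.1*p.2.2 + 2*p.1*p.2.2 + 2*p.1*p.2.1 = (8*n+3 : ℤ)} = Nat.card {p : ℤ × ℤ × ℤ // p.1^2 + p.2.1^2 + p.2.2^2 = (8*n+3 : ℤ)} :=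
  Nat.card_congr <| quadFormEquivSumSq <| by unfold Int.ModEq; omega
end

section
/- For every nonnegative integer n, the number of integer solutions (x,y,z) to x² + y² + 2z² = 2n equals the number of integer solutions to x² + y² + z² = n. -/
/-!
Since `(a + b)² + (a - b)² = 2 (a² + b²)`, the map `(a, b, c) ↦ (a + b, a - b, c)` sends solutions
of `a² + b² + c² = n` to solutions of `x² + y² + 2z² = 2n`. It is a bijection: `x² + y²` even forces
`x ≡ y [ZMOD 2]`, so `((x + y) / 2, (x - y) / 2, z)` is an integral inverse.
-/

theorem Int.even_add_of_even_sq_add_sq {x y : ℤ} (h : Even (x ^ 2 + y ^ 2)) : Even (x + y) := by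
  simpa [Int.even_add, Int.even_pow] using h

theorem Int.even_add_of_sq_add_sq_add_two_mul_sq_eq {x y z n : ℤ}
    (h : x ^ 2 + y ^ 2 + 2 * z ^ 2 = 2 * n) : Even (x + y) :=
  Int.even_add_of_even_sq_add_sq ⟨n - z ^ 2, by linear_combination h⟩

def sumThreeSqEquivSumSqAddTwoSq (n : ℤ) :
    {p : ℤ × ℤ × ℤ // p.1 ^ 2 + p.2.1 ^ 2 + p.2.2 ^ 2 = n} ≃
      {p : ℤ × ℤ × ℤ // p.1 ^ 2 + p.2.1 ^ 2 + 2 * p.2.2 ^ 2 = 2 * n} where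
  toFun p := ⟨(p.1.1 + p.1.2.1, p.1.1 - p.1.2.1, p.1.2.2), by linear_combination 2 * p.2⟩
  invFun q := ⟨((q.1.1 + q.1.2.1) / 2, (q.1.1 - q.1.2.1) / 2, q.1.2.2), by
    obtain ⟨⟨x, y, z⟩, hq : x ^ 2 + y ^ 2 + 2 * z ^ 2 = 2 * n⟩ := q
    obtain ⟨a, ha⟩ := Int.even_add_of_sq_add_sq_add_two_mul_sq_eq hq
    obtain rfl : x = a + a - y := by omega
    have hx : (a + a - y + y) / 2 = a := by omega
    have hy : (a + a - y - y) / 2 = a - y := by omega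
    simp only [hx, hy]
    exact mul_left_cancel₀ two_ne_zero (by linear_combination hq)⟩
  left_inv := by
    rintro ⟨⟨a, b, c⟩, _⟩
    ext <;> simp only <;> omega
  right_inv := by
    rintro ⟨⟨x, y, z⟩, hq : x ^ 2 + y ^ 2 + 2 * z ^ 2 = 2 * n⟩
    obtain ⟨a, ha⟩ := Int.even_add_of_sq_add_sq_add_two_mul_sq_eq hq
    ext <;> simp only <;> omega

theorem stmt7 (n : ℕ) :
    Nat.card {p : ℤ × ℤ × ℤ // p.1^2 + p.2.1^2 + 2*p.2.2^2 = (2*n : ℤ)} = Nat.card {p : ℤ × ℤ × ℤ // p.1^2 + p.2.1^2 + p.2.2^2 = (n : ℤ)} :=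
  (Nat.card_congr (sumThreeSqEquivSumSqAddTwoSq n)).symm
end

section
/- For every nonnegative integer n, six times the number of integer solutions (x,y,z) to x² + 2y² + 4z² = 2n+1 equals the number of integer solutions to x² + y² + z² = 4n+2. -/
/-! Write `m = 2n + 1`. In a representation of `2m` as a sum of three squares exactly one
coordinate is even, and permuting coordinates shows that the three cases are equinumerous.
Those with the last coordinate even correspond, via `(u, v, w) ↦ (u + v, u - v, 2w)`, to the
representations of `m` by `u² + v² + 2w²`. There exactly one of `u, v` is even since `m` is odd;
the two cases are exchanged by `u ↔ v`, and those with `v = 2z` are the representations `(u, w, z)`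
of `m` by `x² + 2y² + 4z²`. Hence `r₁₁₁(2m) = 3 r₁₁₂(m) = 6 r₁₂₄(m)`. -/

open Set

def ternaryReps (a b c m : ℤ) : Set (ℤ × ℤ × ℤ) :=
  {p | a * p.1 ^ 2 + b * p.2.1 ^ 2 + c * p.2.2 ^ 2 = m}

lemma ternaryReps_finite {a b c : ℤ} (ha : 0 < a) (hb : 0 < b) (hc : 0 < c) (m : ℤ) :
    (ternaryReps a b c m).Finite := by
  have bound : ∀ {k t : ℤ}, 0 < k → k * t ^ 2 ≤ m → -m ≤ t ∧ t ≤ m := fun {k t} hk ht => by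
    constructor <;> nlinarith [sq_nonneg (t + 1), sq_nonneg (t - 1)]
  refine (finite_Icc (-m, -m, -m) (m, m, m)).subset ?_
  rintro ⟨x, y, z⟩ h
  simp only [ternaryReps, mem_ofPred_eq] at h
  have hx := bound ha (by nlinarith [sq_nonneg y, sq_nonneg z] : a * x ^ 2 ≤ m)
  have hy := bound hb (by nlinarith [sq_nonneg x, sq_nonneg z] : b * y ^ 2 ≤ m)
  have hz := bound hc (by nlinarith [sq_nonneg x, sq_nonneg y] : c * z ^ 2 ≤ m)
  exact ⟨⟨hx.1, hy.1, hz.1⟩, ⟨hx.2, hy.2, hz.2⟩⟩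

lemma Int.emod_two_and_sq_emod_four (x : ℤ) :
    x % 2 = 0 ∧ x ^ 2 % 4 = 0 ∨ x % 2 = 1 ∧ x ^ 2 % 4 = 1 := by
  rcases Int.even_or_odd x with hx | hx
  · obtain ⟨k, rfl⟩ := hx
    left; constructor
    · omega
    · rw [show (k + k) ^ 2 = 4 * k ^ 2 by ring]; omega
  · exact Or.inr ⟨Int.odd_iff.mp hx, Int.sq_mod_four_eq_one_of_odd hx⟩

lemma even_iff_not_even_of_sq_add_sq_add_two_mul_sq {m x y z : ℤ} (hm : Odd m)
    (h : x ^ 2 + y ^ 2 + 2 * z ^ 2 = m) : Even x ↔ ¬ Even y := by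
  have := x.emod_two_and_sq_emod_four
  have := y.emod_two_and_sq_emod_four
  rw [Int.odd_iff] at hm
  simp only [Int.even_iff]
  omega

lemma not_even_and_even_of_sum_three_sq {m x y z : ℤ} (hm : Odd m)
    (h : x ^ 2 + y ^ 2 + z ^ 2 = 2 * m) : ¬ (Even x ∧ Even y) := by
  have := x.emod_two_and_sq_emod_four
  have := y.emod_two_and_sq_emod_four
  have := z.emod_two_and_sq_emod_four
  rw [Int.odd_iff] at hm
  simp only [Int.even_iff]
  omega

lemma even_or_even_or_even_of_sum_three_sq {m x y z : ℤ}
    (h : x ^ 2 + y ^ 2 + z ^ 2 = 2 * m) : Even x ∨ Even y ∨ Even z := by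
  have := x.emod_two_and_sq_emod_four
  have := y.emod_two_and_sq_emod_four
  have := z.emod_two_and_sq_emod_four
  simp only [Int.even_iff]
  omega

lemma image_ternaryReps_124 (m : ℤ) :
    (fun p : ℤ × ℤ × ℤ => (p.1, 2 * p.2.2, p.2.1)) '' ternaryReps 1 2 4 m =
      ternaryReps 1 1 2 m ∩ {p | Even p.2.1} := by
  ext ⟨u, v, w⟩
  simp only [mem_image, mem_inter_iff, ternaryReps, mem_ofPred_eq, Prod.exists, Prod.mk.injEq]
  constructor
  · rintro ⟨x, y, z, h, rfl, rfl, rfl⟩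
    exact ⟨by linear_combination h, even_two_mul z⟩
  · rintro ⟨h, k, rfl⟩
    exact ⟨u, w, k, by linear_combination h, rfl, by ring, rfl⟩

lemma image_ternaryReps_112 (m : ℤ) :
    (fun p : ℤ × ℤ × ℤ => (p.1 + p.2.1, p.1 - p.2.1, 2 * p.2.2)) '' ternaryReps 1 1 2 m =
      ternaryReps 1 1 1 (2 * m) ∩ {p | Even p.2.2} := by
  ext ⟨a, b, c⟩
  simp only [mem_image, mem_inter_iff, ternaryReps, mem_ofPred_eq, Prod.exists, Prod.mk.injEq]
  constructor
  · rintro ⟨u, v, w, h, rfl, rfl, rfl⟩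
    exact ⟨by linear_combination 2 * h, even_two_mul w⟩
  · rintro ⟨h, k, rfl⟩
    replace h : a ^ 2 + b ^ 2 + 4 * k ^ 2 = 2 * m := by linear_combination h
    obtain ⟨s, hs⟩ : Even (a + b) := by
      have := a.emod_two_and_sq_emod_four
      have := b.emod_two_and_sq_emod_four
      rw [Int.even_iff]
      omega
    refine ⟨s, a - s, k, ?_, by ring, by linarith, by ring⟩
    have : 2 * (s ^ 2 + (a - s) ^ 2 + 2 * k ^ 2) = 2 * m := by
      linear_combination h + (a - b - 2 * s) * hs
    linarith

lemma ncard_preimage_of_involutive {α : Type*} {f : α → α} (hf : Function.Involutive f)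
    (s : Set α) : (f ⁻¹' s).ncard = s.ncard :=
  ncard_preimage_of_injective_subset_range hf.injective (by simp [hf.surjective.range_eq])

lemma preimage_swap_fst_snd_ternaryReps (a c m : ℤ) :
    (fun p : ℤ × ℤ × ℤ => (p.2.1, p.1, p.2.2)) ⁻¹' ternaryReps a a c m = ternaryReps a a c m := by
  ext ⟨x, y, z⟩
  simp only [ternaryReps, mem_preimage, mem_ofPred_eq]
  ring_nf

lemma preimage_swap_fst_thd_ternaryReps (a b m : ℤ) :
    (fun p : ℤ × ℤ × ℤ => (p.2.2, p.2.1, p.1)) ⁻¹' ternaryReps a b a m = ternaryReps a b a m := by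
  ext ⟨x, y, z⟩
  simp only [ternaryReps, mem_preimage, mem_ofPred_eq]
  ring_nf

lemma preimage_swap_snd_thd_ternaryReps (a b m : ℤ) :
    (fun p : ℤ × ℤ × ℤ => (p.1, p.2.2, p.2.1)) ⁻¹' ternaryReps a b b m = ternaryReps a b b m := by
  ext ⟨x, y, z⟩
  simp only [ternaryReps, mem_preimage, mem_ofPred_eq]
  ring_nf

lemma ncard_ternaryReps_112_eq_add_of_odd {m : ℤ} (hm : Odd m) :
    (ternaryReps 1 1 2 m).ncard = (ternaryReps 1 1 2 m ∩ {p | Even p.1}).ncard +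
      (ternaryReps 1 1 2 m ∩ {p | Even p.2.1}).ncard := by
  set S := ternaryReps 1 1 2 m
  have hfin (t : Set (ℤ × ℤ × ℤ)) : (S ∩ t).Finite :=
    (ternaryReps_finite one_pos one_pos two_pos m).subset inter_subset_left
  have hcover : S = (S ∩ {p | Even p.1}) ∪ (S ∩ {p | Even p.2.1}) := by
    rw [← inter_union_distrib_left, left_eq_inter]
    rintro ⟨x, y, z⟩ h
    simp only [S, ternaryReps, one_mul, mem_ofPred_eq] at h
    have := even_iff_not_even_of_sq_add_sq_add_two_mul_sq hm h
    simp only [mem_union, mem_ofPred_eq]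
    tauto
  have hdisj : Disjoint (S ∩ {p | Even p.1}) (S ∩ {p | Even p.2.1}) := by
    rw [disjoint_left]
    rintro ⟨x, y, z⟩ ⟨h, hx⟩ ⟨-, hy⟩
    simp only [S, ternaryReps, one_mul, mem_ofPred_eq] at h hx hy
    exact (even_iff_not_even_of_sq_add_sq_add_two_mul_sq hm h).mp hx hy
  conv_lhs => rw [hcover]
  exact ncard_union_eq hdisj (hfin _) (hfin _)

lemma ncard_ternaryReps_111_eq_add_of_odd {m : ℤ} (hm : Odd m) :
    (ternaryReps 1 1 1 (2 * m)).ncard = (ternaryReps 1 1 1 (2 * m) ∩ {p | Even p.1}).ncard +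
      (ternaryReps 1 1 1 (2 * m) ∩ {p | Even p.2.1}).ncard +
      (ternaryReps 1 1 1 (2 * m) ∩ {p | Even p.2.2}).ncard := by
  set S := ternaryReps 1 1 1 (2 * m)
  have hfin (t : Set (ℤ × ℤ × ℤ)) : (S ∩ t).Finite :=
    (ternaryReps_finite one_pos one_pos one_pos _).subset inter_subset_left
  have hcover : S = (S ∩ {p | Even p.1}) ∪ (S ∩ {p | Even p.2.1}) ∪ (S ∩ {p | Even p.2.2}) := by
    rw [← inter_union_distrib_left, ← inter_union_distrib_left, left_eq_inter]
    rintro ⟨x, y, z⟩ h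
    simp only [S, ternaryReps, one_mul, mem_ofPred_eq] at h
    have := even_or_even_or_even_of_sum_three_sq h
    simp only [mem_union, mem_ofPred_eq]
    tauto
  have hdisj₁ : Disjoint (S ∩ {p | Even p.1}) (S ∩ {p | Even p.2.1}) := by
    rw [disjoint_left]
    rintro ⟨x, y, z⟩ ⟨h, hx⟩ ⟨-, hy⟩
    simp only [S, ternaryReps, one_mul, mem_ofPred_eq] at h hx hy
    exact not_even_and_even_of_sum_three_sq hm h ⟨hx, hy⟩
  have hdisj₂ : Disjoint (S ∩ {p | Even p.1} ∪ S ∩ {p | Even p.2.1}) (S ∩ {p | Even p.2.2}) := by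
    rw [disjoint_union_left, disjoint_left, disjoint_left]
    constructor
    · rintro ⟨x, y, z⟩ ⟨h, hx⟩ ⟨-, hz⟩
      simp only [S, ternaryReps, one_mul, mem_ofPred_eq] at h hx hz
      exact not_even_and_even_of_sum_three_sq (z := y) hm (by linarith) ⟨hx, hz⟩
    · rintro ⟨x, y, z⟩ ⟨h, hy⟩ ⟨-, hz⟩
      simp only [S, ternaryReps, one_mul, mem_ofPred_eq] at h hy hz
      exact not_even_and_even_of_sum_three_sq (z := x) hm (by linarith) ⟨hy, hz⟩
  conv_lhs => rw [hcover]
  rw [ncard_union_eq hdisj₂ ((hfin _).union (hfin _)) (hfin _),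
    ncard_union_eq hdisj₁ (hfin _) (hfin _)]

lemma ncard_ternaryReps_112_of_odd {m : ℤ} (hm : Odd m) :
    (ternaryReps 1 1 2 m).ncard = 2 * (ternaryReps 1 2 4 m).ncard := by
  have hsnd : (ternaryReps 1 1 2 m ∩ {p | Even p.2.1}).ncard = (ternaryReps 1 2 4 m).ncard := by
    rw [← image_ternaryReps_124, ncard_image_of_injective]
    rintro ⟨x, y, z⟩ ⟨x', y', z'⟩ h
    simp only [Prod.mk.injEq] at h ⊢
    omega
  have hfst : ternaryReps 1 1 2 m ∩ {p | Even p.1} =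
      (fun p => (p.2.1, p.1, p.2.2)) ⁻¹' (ternaryReps 1 1 2 m ∩ {p | Even p.2.1}) := by
    rw [preimage_inter, preimage_swap_fst_snd_ternaryReps]
    rfl
  rw [ncard_ternaryReps_112_eq_add_of_odd hm, hfst, ncard_preimage_of_involutive (fun _ => rfl),
    hsnd, two_mul]

lemma ncard_ternaryReps_111_two_mul_of_odd {m : ℤ} (hm : Odd m) :
    (ternaryReps 1 1 1 (2 * m)).ncard = 3 * (ternaryReps 1 1 2 m).ncard := by
  have hthd : (ternaryReps 1 1 1 (2 * m) ∩ {p | Even p.2.2}).ncard =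
      (ternaryReps 1 1 2 m).ncard := by
    rw [← image_ternaryReps_112, ncard_image_of_injective]
    rintro ⟨x, y, z⟩ ⟨x', y', z'⟩ h
    simp only [Prod.mk.injEq] at h ⊢
    omega
  have hfst : ternaryReps 1 1 1 (2 * m) ∩ {p | Even p.1} =
      (fun p => (p.2.2, p.2.1, p.1)) ⁻¹' (ternaryReps 1 1 1 (2 * m) ∩ {p | Even p.2.2}) := by
    rw [preimage_inter, preimage_swap_fst_thd_ternaryReps]
    rfl
  have hsnd : ternaryReps 1 1 1 (2 * m) ∩ {p | Even p.2.1} =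
      (fun p => (p.1, p.2.2, p.2.1)) ⁻¹' (ternaryReps 1 1 1 (2 * m) ∩ {p | Even p.2.2}) := by
    rw [preimage_inter, preimage_swap_snd_thd_ternaryReps]
    rfl
  rw [ncard_ternaryReps_111_eq_add_of_odd hm, hfst, hsnd,
    ncard_preimage_of_involutive (fun _ => rfl), ncard_preimage_of_involutive (fun _ => rfl), hthd]
  ring

theorem stmt11 (n : ℕ) :
    6 * Nat.card {p : ℤ × ℤ × ℤ // p.1^2 + 2*p.2.1^2 + 4*p.2.2^2 = (2*n+1 : ℤ)} = Nat.card {p : ℤ × ℤ × ℤ // p.1^2 + p.2.1^2 + p.2.2^2 = (4*n+2 : ℤ)} := by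
  have hodd : Odd (2 * (n : ℤ) + 1) := odd_two_mul_add_one _
  have hA : Nat.card {p : ℤ × ℤ × ℤ // p.1^2 + 2*p.2.1^2 + 4*p.2.2^2 = (2*n+1 : ℤ)} =
      (ternaryReps 1 2 4 (2 * n + 1)).ncard := by
    rw [← Nat.card_coe_set_eq]
    simp only [ternaryReps, one_mul]
    rfl
  have hB : Nat.card {p : ℤ × ℤ × ℤ // p.1^2 + p.2.1^2 + p.2.2^2 = (4*n+2 : ℤ)} =
      (ternaryReps 1 1 1 (2 * (2 * n + 1))).ncard := by
    rw [← Nat.card_coe_set_eq]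
    simp only [ternaryReps, one_mul, show (2 : ℤ) * (2 * n + 1) = 4 * n + 2 by ring]
    rfl
  rw [hA, hB, ncard_ternaryReps_111_two_mul_of_odd hodd, ncard_ternaryReps_112_of_odd hodd]
  ring
end

section
/- For every nonnegative integer n, the number of integer solutions (x,y,z) to x² + 3y² + 3z² + 2yz = 8n equals the number of integer solutions to x² + y² + z² = n. -/
/-! The substitution (x, y, z) = (2(a + b), a - b + c, -a + b + c) turns the form
x² + 3y² + 3z² + 2yz into 8(a² + b² + c²). It is injective, and every solution of
h(x, y, z) = 8n is in its image: reducing modulo 8 shows that h(x, y, z) ≡ 0 forces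
4 ∣ x + y - z and 2 ∣ y + z, which is exactly what inverting the substitution over ℤ requires. -/

lemma form_substitution (a b c : ℤ) :
    (2 * (a + b)) ^ 2 + 3 * (a - b + c) ^ 2 + 3 * (-a + b + c) ^ 2
      + 2 * (a - b + c) * (-a + b + c) = 8 * (a ^ 2 + b ^ 2 + c ^ 2) := by
  ring

lemma zmod_eight_of_form_eq_zero :
    ∀ x y z : ZMod 8, x ^ 2 + 3 * y ^ 2 + 3 * z ^ 2 + 2 * y * z = 0 →
      2 * (x + y - z) = 0 ∧ 4 * (y + z) = 0 := by
  decide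

lemma dvd_of_form_eq_eight_mul {x y z m : ℤ}
    (h : x ^ 2 + 3 * y ^ 2 + 3 * z ^ 2 + 2 * y * z = 8 * m) :
    4 ∣ x + y - z ∧ 2 ∣ y + z := by
  have h8 : (x : ZMod 8) ^ 2 + 3 * (y : ZMod 8) ^ 2 + 3 * (z : ZMod 8) ^ 2
      + 2 * (y : ZMod 8) * (z : ZMod 8) = 0 := by
    have := congrArg (Int.cast : ℤ → ZMod 8) h
    push_cast at this
    rw [this, show (8 : ZMod 8) = 0 from rfl, zero_mul]
  obtain ⟨h₁, h₂⟩ := zmod_eight_of_form_eq_zero _ _ _ h8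
  have d₁ : (8 : ℤ) ∣ 2 * (x + y - z) :=
    (ZMod.intCast_zmod_eq_zero_iff_dvd _ 8).mp (by push_cast; exact h₁)
  have d₂ : (8 : ℤ) ∣ 4 * (y + z) :=
    (ZMod.intCast_zmod_eq_zero_iff_dvd _ 8).mp (by push_cast; exact h₂)
  omega

lemma exists_substitution_of_form_eq_eight_mul {x y z m : ℤ}
    (h : x ^ 2 + 3 * y ^ 2 + 3 * z ^ 2 + 2 * y * z = 8 * m) :
    ∃ a b c : ℤ, x = 2 * (a + b) ∧ y = a - b + c ∧ z = -a + b + c := by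
  obtain ⟨⟨a, ha⟩, ⟨c, hc⟩⟩ := dvd_of_form_eq_eight_mul h
  exact ⟨a, a - (y - z) / 2, c, by omega, by omega, by omega⟩

theorem stmt12 (n : ℕ) :
    Nat.card {p : ℤ × ℤ × ℤ // p.1^2 + 3*p.2.1^2 + 3*p.2.2^2 + 2*p.2.1*p.2.2 = (8*n : ℤ)} = Nat.card {p : ℤ × ℤ × ℤ // p.1^2 + p.2.1^2 + p.2.2^2 = (n : ℤ)} := by
  let f : {p : ℤ × ℤ × ℤ // p.1^2 + p.2.1^2 + p.2.2^2 = (n : ℤ)} →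
      {p : ℤ × ℤ × ℤ // p.1^2 + 3*p.2.1^2 + 3*p.2.2^2 + 2*p.2.1*p.2.2 = (8*n : ℤ)} :=
    fun ⟨(a, b, c), hp⟩ => ⟨(2 * (a + b), a - b + c, -a + b + c), by
      rw [form_substitution, hp]⟩
  have f_injective : Function.Injective f := by
    rintro ⟨⟨a, b, c⟩, _⟩ ⟨⟨a', b', c'⟩, _⟩ h
    simp only [f, Subtype.mk.injEq, Prod.mk.injEq] at h ⊢
    omega
  have f_surjective : Function.Surjective f := by
    rintro ⟨⟨x, y, z⟩, hp⟩
    obtain ⟨a, b, c, rfl, rfl, rfl⟩ := exists_substitution_of_form_eq_eight_mul hp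
    have hsum : a ^ 2 + b ^ 2 + c ^ 2 = n := by
      linarith [form_substitution a b c]
    exact ⟨⟨(a, b, c), hsum⟩, rfl⟩
  exact Nat.card_congr (Equiv.ofBijective f ⟨f_injective, f_surjective⟩).symm
end

section
/- For every nonnegative integer n, six times the number of integer solutions (x,y,z) to x² + 3y² + 3z² + 2yz = 2n+1 equals the number of integer solutions to x² + y² + z² = 4n+2. -/
/-!
The linear map `(x, y, z) ↦ (x + y - z, x - y + z, 2y + 2z)` doubles the form: the sum of the
squares of its coordinates is `2 h(x, y, z)`. So it identifies the solutions of `h = m` with the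
representations `a² + b² + c² = 2m` lying in its image, the lattice `2 ∣ c`, `4 ∣ a - b + c`.
For odd `m` exactly one of `a, b, c` is even: moving it to the last place gives the factor 3, and
then exactly one of `(a, b, c)`, `(a, -b, c)` lies in the lattice, which gives the factor 2.
-/

theorem Int.sq_emod_four_eq_emod_two (t : ℤ) : t ^ 2 % 4 = t % 2 := by
  rcases Int.even_or_odd' t with ⟨k, rfl | rfl⟩ <;> ring_nf <;> omega

def Equiv.boolProdSubtypeOfInvolutive {α : Type*} {σ : α → α} (hσ : Function.Involutive σ)
    (P : α → Prop) [DecidablePred P] (hP : ∀ x, P (σ x) ↔ ¬ P x) : Bool × {x // P x} ≃ α where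
  toFun s := bif s.1 then σ s.2 else s.2
  invFun x := if h : P x then (false, ⟨x, h⟩) else (true, ⟨σ x, (hP x).2 h⟩)
  left_inv := by
    rintro ⟨_ | _, x, hx⟩
    · simp [hx]
    · simp [dif_neg fun h => (hP x).1 h hx, hσ x]
  right_inv x := by
    by_cases h : P x <;> simp [h, hσ x]

namespace SumThreeSquares

def formH (p : ℤ × ℤ × ℤ) : ℤ := p.1 ^ 2 + 3 * p.2.1 ^ 2 + 3 * p.2.2 ^ 2 + 2 * p.2.1 * p.2.2

def sumThreeSq (p : ℤ × ℤ × ℤ) : ℤ := p.1 ^ 2 + p.2.1 ^ 2 + p.2.2 ^ 2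

lemma emod_two_add_emod_two_add_emod_two_of_sumThreeSq {q : ℤ × ℤ × ℤ} {m : ℤ}
    (hq : sumThreeSq q = 2 * m) (hm : Odd m) : q.1 % 2 + q.2.1 % 2 + q.2.2 % 2 = 2 := by
  have := Int.sq_emod_four_eq_emod_two q.1
  have := Int.sq_emod_four_eq_emod_two q.2.1
  have := Int.sq_emod_four_eq_emod_two q.2.2
  obtain ⟨k, rfl⟩ := hm
  unfold sumThreeSq at hq
  omega

def toSumSq (p : ℤ × ℤ × ℤ) : ℤ × ℤ × ℤ :=
  (p.1 + p.2.1 - p.2.2, p.1 - p.2.1 + p.2.2, 2 * p.2.1 + 2 * p.2.2)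

def ofSumSq (q : ℤ × ℤ × ℤ) : ℤ × ℤ × ℤ :=
  ((q.1 + q.2.1) / 2, (q.1 - q.2.1 + q.2.2) / 4, (q.2.2 - q.1 + q.2.1) / 4)

/-- The range of `toSumSq`, a sublattice of index 8. -/
def InLattice (q : ℤ × ℤ × ℤ) : Prop := 2 ∣ q.2.2 ∧ 4 ∣ q.1 - q.2.1 + q.2.2

lemma sumThreeSq_toSumSq (p : ℤ × ℤ × ℤ) : sumThreeSq (toSumSq p) = 2 * formH p := by
  simp only [sumThreeSq, toSumSq, formH]; ring

lemma inLattice_toSumSq (p : ℤ × ℤ × ℤ) : InLattice (toSumSq p) := by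
  simp only [InLattice, toSumSq]; omega

lemma ofSumSq_toSumSq (p : ℤ × ℤ × ℤ) : ofSumSq (toSumSq p) = p := by
  obtain ⟨x, y, z⟩ := p
  simp only [ofSumSq, toSumSq, Prod.mk.injEq]; omega

lemma toSumSq_ofSumSq {q : ℤ × ℤ × ℤ} (hq : InLattice q) : toSumSq (ofSumSq q) = q := by
  obtain ⟨a, b, c⟩ := q
  simp only [InLattice] at hq
  simp only [ofSumSq, toSumSq, Prod.mk.injEq]; omega

def formHEquivInLattice (m : ℤ) :
    {p // formH p = m} ≃ {q // sumThreeSq q = 2 * m ∧ InLattice q} where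
  toFun p := ⟨toSumSq p, by rw [sumThreeSq_toSumSq, p.2], inLattice_toSumSq p⟩
  invFun q := ⟨ofSumSq q, by
    have h := sumThreeSq_toSumSq (ofSumSq q)
    rw [toSumSq_ofSumSq q.2.2, q.2.1] at h
    linarith⟩
  left_inv p := Subtype.ext (ofSumSq_toSumSq p)
  right_inv q := Subtype.ext (toSumSq_ofSumSq q.2.2)

def negSnd (q : ℤ × ℤ × ℤ) : ℤ × ℤ × ℤ := (q.1, -q.2.1, q.2.2)

lemma negSnd_negSnd (q : ℤ × ℤ × ℤ) : negSnd (negSnd q) = q := by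
  simp [negSnd]

lemma sumThreeSq_negSnd (q : ℤ × ℤ × ℤ) : sumThreeSq (negSnd q) = sumThreeSq q := by
  simp [sumThreeSq, negSnd]

lemma inLattice_negSnd_iff {q : ℤ × ℤ × ℤ} {m : ℤ} (hq : sumThreeSq q = 2 * m) (hm : Odd m)
    (hc : 2 ∣ q.2.2) : InLattice (negSnd q) ↔ ¬ InLattice q := by
  have := emod_two_add_emod_two_add_emod_two_of_sumThreeSq hq hm
  -- `a` and `b` are odd, so `a - b + c` and `a + b + c` differ by `2b ≡ 2 (mod 4)`.
  simp only [InLattice, negSnd]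
  omega

lemma card_sumThreeSq_two_dvd_last {m : ℤ} (hm : Odd m) :
    Nat.card {q // sumThreeSq q = 2 * m ∧ 2 ∣ q.2.2} =
      2 * Nat.card {q // sumThreeSq q = 2 * m ∧ InLattice q} := by
  let σ (q : {q // sumThreeSq q = 2 * m ∧ 2 ∣ q.2.2}) : {q // sumThreeSq q = 2 * m ∧ 2 ∣ q.2.2} :=
    ⟨negSnd q, by rw [sumThreeSq_negSnd]; exact q.2.1, q.2.2⟩
  have hσ : Function.Involutive σ := fun q => Subtype.ext (negSnd_negSnd q)
  classical
  have e := Equiv.boolProdSubtypeOfInvolutive hσ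
    (fun q => sumThreeSq q.1 = 2 * m ∧ InLattice q.1) fun q => by
      simp only [σ, sumThreeSq_negSnd, q.2.1, true_and]
      exact inLattice_negSnd_iff q.2.1 hm q.2.2
  rw [← Nat.card_congr e, Nat.card_prod, Nat.card_eq_fintype_card (α := Bool), Fintype.card_bool,
    Nat.card_congr (Equiv.subtypeSubtypeEquivSubtype
      (q := fun q => sumThreeSq q = 2 * m ∧ InLattice q) fun hq => ⟨hq.1, hq.2.1⟩)]

def moveLastTo : Fin 3 → ℤ × ℤ × ℤ → ℤ × ℤ × ℤ
  | 0, (a, b, c) => (c, a, b)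
  | 1, (a, b, c) => (a, c, b)
  | 2, p => p

def moveToLast : Fin 3 → ℤ × ℤ × ℤ → ℤ × ℤ × ℤ
  | 0, (a, b, c) => (b, c, a)
  | 1, (a, b, c) => (a, c, b)
  | 2, p => p

def evenIndex (q : ℤ × ℤ × ℤ) : Fin 3 :=
  if 2 ∣ q.1 then 0 else if 2 ∣ q.2.1 then 1 else 2

lemma moveToLast_moveLastTo (i : Fin 3) (p : ℤ × ℤ × ℤ) : moveToLast i (moveLastTo i p) = p := by
  fin_cases i <;> rfl

lemma moveLastTo_moveToLast (i : Fin 3) (p : ℤ × ℤ × ℤ) : moveLastTo i (moveToLast i p) = p := by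
  fin_cases i <;> rfl

lemma sumThreeSq_moveLastTo (i : Fin 3) (p : ℤ × ℤ × ℤ) :
    sumThreeSq (moveLastTo i p) = sumThreeSq p := by
  fin_cases i <;> simp only [sumThreeSq, moveLastTo] <;> ring

lemma sumThreeSq_moveToLast (i : Fin 3) (p : ℤ × ℤ × ℤ) :
    sumThreeSq (moveToLast i p) = sumThreeSq p := by
  rw [← sumThreeSq_moveLastTo i, moveLastTo_moveToLast]

lemma evenIndex_moveLastTo (i : Fin 3) {p : ℤ × ℤ × ℤ} (ha : ¬ 2 ∣ p.1) (hb : ¬ 2 ∣ p.2.1)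
    (hc : 2 ∣ p.2.2) : evenIndex (moveLastTo i p) = i := by
  fin_cases i <;> simp [evenIndex, moveLastTo, ha, hb, hc]

lemma two_dvd_moveToLast_evenIndex {q : ℤ × ℤ × ℤ} (h : 2 ∣ q.1 ∨ 2 ∣ q.2.1 ∨ 2 ∣ q.2.2) :
    2 ∣ (moveToLast (evenIndex q) q).2.2 := by
  unfold evenIndex
  split_ifs <;> simp_all [moveToLast]

def evenPositionEquiv {m : ℤ} (hm : Odd m) :
    Fin 3 × {q // sumThreeSq q = 2 * m ∧ 2 ∣ q.2.2} ≃ {q // sumThreeSq q = 2 * m} where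
  toFun ip := ⟨moveLastTo ip.1 ip.2, by rw [sumThreeSq_moveLastTo]; exact ip.2.2.1⟩
  invFun q := (evenIndex q, ⟨moveToLast (evenIndex q) q, by rw [sumThreeSq_moveToLast]; exact q.2,
    two_dvd_moveToLast_evenIndex (by
      have := emod_two_add_emod_two_add_emod_two_of_sumThreeSq q.2 hm; omega)⟩)
  left_inv := by
    rintro ⟨i, p, hp, hc⟩
    have := emod_two_add_emod_two_add_emod_two_of_sumThreeSq hp hm
    have hi := evenIndex_moveLastTo i (p := p) (by omega) (by omega) hc
    ext1
    · exact hi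
    · exact Subtype.ext (by simp only [hi, moveToLast_moveLastTo])
  right_inv q := Subtype.ext (moveLastTo_moveToLast _ _)

theorem card_sumThreeSq_eq_six_mul_card_formH {m : ℤ} (hm : Odd m) :
    Nat.card {q // sumThreeSq q = 2 * m} = 6 * Nat.card {p // formH p = m} := by
  rw [← Nat.card_congr (evenPositionEquiv hm), Nat.card_prod, card_sumThreeSq_two_dvd_last hm,
    Nat.card_congr (formHEquivInLattice m), Nat.card_eq_fintype_card, Fintype.card_fin]
  ring

end SumThreeSquares

theorem stmt14 (n : ℕ) :
    6 * Nat.card {p : ℤ × ℤ × ℤ // p.1^2 + 3*p.2.1^2 + 3*p.2.2^2 + 2*p.2.1*p.2.2 = (2*n+1 : ℤ)} = Nat.card {p : ℤ × ℤ × ℤ // p.1^2 + p.2.1^2 + p.2.2^2 = (4*n+2 : ℤ)} := by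
  rw [show (4 * n + 2 : ℤ) = 2 * (2 * n + 1) by ring]
  exact (SumThreeSquares.card_sumThreeSq_eq_six_mul_card_formH (odd_two_mul_add_one (n : ℤ))).symm
end

section
/- For every nonnegative integer n, the number of integer solutions (x,y,z) to x² + 3y² + 3z² = 3n equals the number of integer solutions to x² + y² + 3z² = n. -/
/-! In a solution of `x² + 3y² + 3z² = 3n` the prime `3` divides `x²`, hence `x`; writing
`x = 3w`, the equation becomes `y² + z² + 3w² = n`, so `(x, y, z) ↦ (y, z, x / 3)` is a
bijection onto the solutions of `x² + y² + 3z² = n`. -/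

lemma three_dvd_of_sq_add_three_mul_sq_add_three_mul_sq {x y z N : ℤ}
    (h : x ^ 2 + 3 * y ^ 2 + 3 * z ^ 2 = 3 * N) : 3 ∣ x :=
  Int.prime_three.dvd_of_dvd_pow (n := 2) ⟨N - y ^ 2 - z ^ 2, by linarith⟩

def threeMulSolutionsEquiv (N : ℤ) :
    {p : ℤ × ℤ × ℤ // p.1 ^ 2 + 3 * p.2.1 ^ 2 + 3 * p.2.2 ^ 2 = 3 * N} ≃
      {p : ℤ × ℤ × ℤ // p.1 ^ 2 + p.2.1 ^ 2 + 3 * p.2.2 ^ 2 = N} where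
  toFun := fun ⟨(x, y, z), h⟩ => ⟨(y, z, x / 3), by
    obtain ⟨w, rfl⟩ := three_dvd_of_sq_add_three_mul_sq_add_three_mul_sq h
    rw [Int.mul_ediv_cancel_left _ three_ne_zero]
    linarith⟩
  invFun := fun ⟨(x, y, z), h⟩ => ⟨(3 * z, x, y), by linarith⟩
  left_inv := fun ⟨(x, y, z), h⟩ => by
    have hx := three_dvd_of_sq_add_three_mul_sq_add_three_mul_sq h
    ext <;> simp [Int.mul_ediv_cancel' hx]
  right_inv := fun ⟨(x, y, z), h⟩ => by
    ext <;> simp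

theorem stmt15 (n : ℕ) :
    Nat.card {p : ℤ × ℤ × ℤ // p.1^2 + 3*p.2.1^2 + 3*p.2.2^2 = (3*n : ℤ)} = Nat.card {p : ℤ × ℤ × ℤ // p.1^2 + p.2.1^2 + 3*p.2.2^2 = (n : ℤ)} :=
  Nat.card_congr (threeMulSolutionsEquiv n)
end

section
/- For every nonnegative integer n, the number of integer solutions (x,y,z) to x² + 3y² + 3z² = n equals the number of integer solutions to x² + 3y² + 3z² = 9n. -/
/-! Every solution of `x² + 3y² + 3z² = 9n` has all coordinates divisible by 3 (modulo 3 first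
`x ≡ 0`, then `y² + z² ≡ 0`, and `-1` is not a square mod 3), so scaling by 3 is a bijection
from the solutions for `n` onto those for `9n`. -/

-- Otherwise `-1 = (a / b)²` in `ZMod p`.
theorem Int.dvd_of_dvd_sq_add_sq {p : ℕ} [Fact p.Prime] (hp : p % 4 = 3) {a b : ℤ}
    (h : (p : ℤ) ∣ a ^ 2 + b ^ 2) : (p : ℤ) ∣ b := by
  by_contra hb
  have hb' : (b : ZMod p) ≠ 0 := by rwa [Ne, ZMod.intCast_zmod_eq_zero_iff_dvd]
  refine ZMod.mod_four_ne_three_of_sq_eq_neg_sq' (x := (a : ZMod p)) hb' ?_ hp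
  rw [eq_neg_iff_add_eq_zero]
  exact_mod_cast (ZMod.intCast_zmod_eq_zero_iff_dvd _ p).mpr h

theorem three_dvd_of_sq_add_three_mul_sq_add_three_mul_sq_eq_nine_mul {x y z m : ℤ}
    (h : x ^ 2 + 3 * y ^ 2 + 3 * z ^ 2 = 9 * m) : 3 ∣ x ∧ 3 ∣ y ∧ 3 ∣ z := by
  have hx : 3 ∣ x := Int.prime_three.dvd_of_dvd_pow (n := 2) ⟨3 * m - y ^ 2 - z ^ 2, by linarith⟩
  obtain ⟨a, rfl⟩ := hx
  have hyz : ((3 : ℕ) : ℤ) ∣ y ^ 2 + z ^ 2 := ⟨m - a ^ 2, by push_cast; linarith⟩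
  have : Fact (Nat.Prime 3) := ⟨Nat.prime_three⟩
  exact ⟨dvd_mul_right 3 a, Int.dvd_of_dvd_sq_add_sq rfl ((add_comm (y ^ 2) _) ▸ hyz),
    Int.dvd_of_dvd_sq_add_sq rfl hyz⟩

theorem stmt16 (n : ℕ) :
    Nat.card {p : ℤ × ℤ × ℤ // p.1^2 + 3*p.2.1^2 + 3*p.2.2^2 = (n : ℤ)} = Nat.card {p : ℤ × ℤ × ℤ // p.1^2 + 3*p.2.1^2 + 3*p.2.2^2 = (9*n : ℤ)} := by
  refine Nat.card_congr (Equiv.ofBijective (fun p ↦ ⟨(3 : ℤ) • p.1, ?_⟩) ⟨?_, ?_⟩)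
  · simp only [Prod.smul_fst, Prod.smul_snd, smul_eq_mul, ← p.2]
    ring
  · exact fun p q hpq ↦ Subtype.ext <| smul_right_injective _ three_ne_zero congr($hpq.1)
  · rintro ⟨⟨x, y, z⟩, h⟩
    obtain ⟨⟨a, rfl⟩, ⟨b, rfl⟩, ⟨c, rfl⟩⟩ :=
      three_dvd_of_sq_add_three_mul_sq_add_three_mul_sq_eq_nine_mul h
    exact ⟨⟨(a, b, c), by linarith⟩, rfl⟩
end
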